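/- Let G : ℝ³ → ℝ³ be a C¹ map on the unit cube Ω̂ = [0,1]³ whose Jacobian determinant x ↦ det(J_G(x)) has gradient bounded in norm by L on Ω̂. Let P ⊆ Ω̂ be a finite set of collocation points with det(J_G(p)) ≥ δ > 0 for all p ∈ P. If the fill distance d(P, Ω̂) = sup_{x ∈ Ω̂} min_{p ∈ P} ‖x − p‖ satisfies d(P, Ω̂) < δ/L, then det(J_G(x)) > 0 for every x ∈ Ω̂. -/

import Mathlib

open Set

theorem convex_setOf_forall_apply_mem {ι : Type*} {t : ι → Set ℝ} (ht : ∀ i, Convex ℝ (t i)) :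
    Convex ℝ {x : EuclideanSpace ℝ ι | ∀ i, x i ∈ t i} := by
  have hpre : {x : EuclideanSpace ℝ ι | ∀ i, x i ∈ t i} =
      (EuclideanSpace.equiv ι ℝ).toLinearMap ⁻¹' univ.pi t := by
    ext x
    simp
  rw [hpre]
  exact (convex_pi fun i _ => ht i).linear_preimage _

theorem Convex.sub_mul_le_of_norm_hasFDerivWithin_le {E : Type*} [NormedAddCommGroup E]
    [NormedSpace ℝ E] {s : Set E} (hs : Convex ℝ s) {f : E → ℝ} {f' : E → E →L[ℝ] ℝ}
    {L r : ℝ} (hf : ∀ x ∈ s, HasFDerivWithinAt f (f' x) s x) (hL : ∀ x ∈ s, ‖f' x‖ ≤ L)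
    {x y : E} (hx : x ∈ s) (hy : y ∈ s) (hxy : ‖x - y‖ ≤ r) :
    f y - L * r ≤ f x := by
  have hL₀ : 0 ≤ L := (norm_nonneg _).trans (hL x hx)
  have hlip : ‖f x - f y‖ ≤ L * ‖x - y‖ := hs.norm_image_sub_le_of_norm_hasFDerivWithin_le hf hL hy hx
  have hsub : f y - f x ≤ ‖f x - f y‖ := by
    rw [norm_sub_rev]
    exact le_abs_self _
  linarith [mul_le_mul_of_nonneg_left hxy hL₀]

theorem jacobian_det_pos_of_fill_distance_general
    (Ω : Set (EuclideanSpace ℝ (Fin 3)))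
    (hΩ : Ω = {x : EuclideanSpace ℝ (Fin 3) | ∀ i, x i ∈ Set.Icc (0 : ℝ) 1})
    (f : EuclideanSpace ℝ (Fin 3) → ℝ)
    (f' : EuclideanSpace ℝ (Fin 3) → (EuclideanSpace ℝ (Fin 3) →L[ℝ] ℝ))
    (L : ℝ) (hLpos : 0 < L)
    (hdiff : ∀ x ∈ Ω, HasFDerivWithinAt f (f' x) Ω x)
    (hL : ∀ x ∈ Ω, ‖f' x‖ ≤ L)
    (P : Finset (EuclideanSpace ℝ (Fin 3)))
    (hPsub : ↑P ⊆ Ω)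
    (δ : ℝ)
    (hPδ : ∀ p ∈ P, δ ≤ f p)
    -- the fill distance `d(P, Ω̂) = sup_{x ∈ Ω̂} min_{p ∈ P} ‖x − p‖` is `< δ / L`
    (hfill : ∃ r : ℝ, r < δ / L ∧ ∀ x ∈ Ω, ∃ p ∈ P, ‖x - p‖ ≤ r) :
    ∀ x ∈ Ω, 0 < f x := by
  obtain ⟨r, hr, hnear⟩ := hfill
  have hΩconv : Convex ℝ Ω := hΩ ▸ convex_setOf_forall_apply_mem fun _ => convex_Icc 0 1
  have hLr : L * r < δ := (lt_div_iff₀' hLpos).mp hr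
  intro x hx
  obtain ⟨p, hp, hxp⟩ := hnear x hx
  have hfx : f p - L * r ≤ f x :=
    hΩconv.sub_mul_le_of_norm_hasFDerivWithin_le hdiff hL hx (hPsub hp) hxp
  linarith [hPδ p hp]

/-- Fill-distance criterion for positivity of the Jacobian determinant on the
unit cube: if the Jacobian determinant is at least `δ > 0` at a finite set of
collocation points whose fill distance in the cube is less than `δ / L`, where
`L` bounds the gradient of the Jacobian determinant, then the Jacobian
determinant is positive everywhere on the cube. -/
theorem jacobian_det_pos_of_fill_distance
    (Ω : Set (EuclideanSpace ℝ (Fin 3)))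
    (hΩ : Ω = {x : EuclideanSpace ℝ (Fin 3) | ∀ i, x i ∈ Set.Icc (0 : ℝ) 1})
    (G : EuclideanSpace ℝ (Fin 3) → EuclideanSpace ℝ (Fin 3))
    (hG : ContDiff ℝ 1 G)
    (f : EuclideanSpace ℝ (Fin 3) → ℝ)
    (hf : f = fun x => (fderiv ℝ G x).det)
    (f' : EuclideanSpace ℝ (Fin 3) → (EuclideanSpace ℝ (Fin 3) →L[ℝ] ℝ))
    (L : ℝ) (hLpos : 0 < L)
    (hdiff : ∀ x ∈ Ω, HasFDerivWithinAt f (f' x) Ω x)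
    (hL : ∀ x ∈ Ω, ‖f' x‖ ≤ L)
    (P : Finset (EuclideanSpace ℝ (Fin 3)))
    (hPne : P.Nonempty) (hPsub : ↑P ⊆ Ω)
    (δ : ℝ) (hδ : 0 < δ)
    (hPδ : ∀ p ∈ P, δ ≤ f p)
    -- the fill distance `d(P, Ω̂) = sup_{x ∈ Ω̂} min_{p ∈ P} ‖x − p‖` is `< δ / L`
    (hfill : ∃ r : ℝ, r < δ / L ∧ ∀ x ∈ Ω, ∃ p ∈ P, ‖x - p‖ ≤ r) :
    ∀ x ∈ Ω, 0 < f x :=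
  jacobian_det_pos_of_fill_distance_general Ω hΩ f f' L hLpos hdiff hL P hPsub δ hPδ hfill
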